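/- arXiv:2202.01061 — 3 statements merged into one kernel-verified Lean document; each statement's English description precedes it below -/
import Mathlib

section
/- Let α_j, β_j, γ_j for j = 1,2,3,4 be angles in [0, π] such that for each j (indices mod 4), α_{j+1} + γ_{j+2} + β_{j+3} = π. Define S₁ = Σ_j (cos α_j + cos β_j + cos γ_j) and S₂ = Σ_j (cos α_j + cos β_j + cos γ_j)(cos α_{j+1} + cos γ_{j+2} + cos β_{j+3}). Then 8 S₁ + 2 S₂ ≥ 40. -/
open Real

lemma cos_triangle_key (x y : ℝ) (hx : 0 ≤ x) (hy : 0 ≤ y) (hxy : x + y ≤ π) :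
    1 ≤ Real.cos x + Real.cos y - Real.cos (x + y) := by
  have h1 : Real.cos x + Real.cos y = 2 * Real.cos ((x + y) / 2) * Real.cos ((x - y) / 2) :=
    Real.cos_add_cos x y
  have h2 : Real.cos (x + y) = 2 * Real.cos ((x + y) / 2) ^ 2 - 1 := by
    have := Real.cos_two_mul ((x + y) / 2)
    rw [show 2 * ((x + y) / 2) = x + y by ring] at this
    linarith
  have h3 : 0 ≤ Real.cos ((x + y) / 2) := by
    apply Real.cos_nonneg_of_mem_Icc
    constructor <;> [linarith [Real.pi_pos]; linarith]
  have h4 : Real.cos ((x + y) / 2) ≤ Real.cos ((x - y) / 2) := by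
    rw [← Real.cos_abs ((x - y) / 2)]
    apply Real.cos_le_cos_of_nonneg_of_le_pi (abs_nonneg _) (by linarith)
    rw [abs_div, abs_of_pos (by norm_num : (0:ℝ) < 2)]
    have : |x - y| ≤ x + y := by rw [abs_sub_le_iff]; constructor <;> linarith
    linarith
  nlinarith [mul_nonneg h3 (sub_nonneg.2 h4)]

theorem eight_S1_add_two_S2_ge_forty (α β γ : Fin 4 → ℝ)
    (hα : ∀ j, α j ∈ Set.Icc 0 π) (hβ : ∀ j, β j ∈ Set.Icc 0 π)
    (hγ : ∀ j, γ j ∈ Set.Icc 0 π)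
    (h : ∀ j : Fin 4, α (j + 1) + γ (j + 2) + β (j + 3) = π) :
    40 ≤ 8 * (∑ j : Fin 4, (Real.cos (α j) + Real.cos (β j) + Real.cos (γ j))) +
        2 * (∑ j : Fin 4, (Real.cos (α j) + Real.cos (β j) + Real.cos (γ j)) *
          (Real.cos (α (j + 1)) + Real.cos (γ (j + 2)) + Real.cos (β (j + 3)))) := by
  have hT : ∀ j : Fin 4,
      1 ≤ Real.cos (α (j + 1)) + Real.cos (γ (j + 2)) + Real.cos (β (j + 3)) := by
    intro j
    have h1 := h j
    have ha := hα (j + 1); have hg := hγ (j + 2); have hb := hβ (j + 3)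
    have hc : β (j + 3) = π - (α (j + 1) + γ (j + 2)) := by linarith
    have hcos : Real.cos (β (j + 3)) = - Real.cos (α (j + 1) + γ (j + 2)) := by
      rw [hc, Real.cos_pi_sub]
    have key := cos_triangle_key (α (j + 1)) (γ (j + 2)) ha.1 hg.1 (by linarith [hb.1])
    linarith
  have hS : ∀ j : Fin 4, -3 ≤ Real.cos (α j) + Real.cos (β j) + Real.cos (γ j) := by
    intro j
    have := Real.neg_one_le_cos (α j)
    have := Real.neg_one_le_cos (β j)
    have := Real.neg_one_le_cos (γ j)
    linarith
  have hT0 := hT 0; have hT1 := hT 1; have hT2 := hT 2; have hT3 := hT 3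
  have hS0 := hS 0; have hS1 := hS 1; have hS2 := hS 2; have hS3 := hS 3
  simp only [Fin.sum_univ_four]
  have p0 := mul_nonneg (by linarith : (0:ℝ) ≤ Real.cos (α 0) + Real.cos (β 0) + Real.cos (γ 0) + 3)
    (by linarith : (0:ℝ) ≤ Real.cos (α (0 + 1)) + Real.cos (γ (0 + 2)) + Real.cos (β (0 + 3)) - 1)
  have p1 := mul_nonneg (by linarith : (0:ℝ) ≤ Real.cos (α 1) + Real.cos (β 1) + Real.cos (γ 1) + 3)
    (by linarith : (0:ℝ) ≤ Real.cos (α (1 + 1)) + Real.cos (γ (1 + 2)) + Real.cos (β (1 + 3)) - 1)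
  have p2 := mul_nonneg (by linarith : (0:ℝ) ≤ Real.cos (α 2) + Real.cos (β 2) + Real.cos (γ 2) + 3)
    (by linarith : (0:ℝ) ≤ Real.cos (α (2 + 1)) + Real.cos (γ (2 + 2)) + Real.cos (β (2 + 3)) - 1)
  have p3 := mul_nonneg (by linarith : (0:ℝ) ≤ Real.cos (α 3) + Real.cos (β 3) + Real.cos (γ 3) + 3)
    (by linarith : (0:ℝ) ≤ Real.cos (α (3 + 1)) + Real.cos (γ (3 + 2)) + Real.cos (β (3 + 3)) - 1)
  simp only [Fin.reduceAdd] at hT0 hT1 hT2 hT3 p0 p1 p2 p3 ⊢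
  nlinarith [p0, p1, p2, p3]
end

section
/- Let z₁, z₂, z₃, z₄ be four distinct points in the complex plane forming a convex quadrilateral (in this cyclic order), with side and diagonal lengths a = |z₂−z₃|, b = |z₁−z₃|, c = |z₁−z₂|, d = |z₁−z₄|, e = |z₂−z₄|, f = |z₃−z₄|, and let A_{ijk} denote the area of triangle z_i z_j z_k. Then E₁₂ + E₂₃ + E₃₄ + E₁₄ − E₁₃ − E₂₄ ≥ 0, where E₁₂ = A₁₂₃·A₁₂₄·f·(a+b+e+d−2c), E₂₃ = A₁₂₃·A₂₃₄·d·(c+b+e+f−2a), E₃₄ = A₁₃₄·A₂₃₄·c·(a+e+d+b−2f), E₁₄ = A₁₂₄·A₁₃₄·a·(c+e+b+f−2d), E₁₃ = A₁₂₃·A₁₃₄·e·(a+c+d+f−2b), and E₂₄ = A₁₂₄·A₂₃₄·b·(c+d+f+a−2e). -/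
/-!
Write `S` for the signed area. When the diagonals `z₁z₃` and `z₂z₄` meet, each diagonal
separates the two remaining vertices, so the signed areas of the two triangles on either side of a
diagonal have the same sign; the identity `S₁₂₃ + S₁₃₄ = S₁₂₄ + S₂₃₄` then becomes the area relation
`A₁₂₃ + A₁₃₄ = A₁₂₄ + A₂₃₄`. Meeting diagonals also give `c + f ≤ b + e` and `a + d ≤ b + e`.
Together with the four triangle inequalities through a diagonal and the nonnegativity of the
areas, these facts imply the inequality through an explicit polynomial certificate.
-/

open Real

/-- Unsigned area of the triangle with vertices `p`, `q`, `r` in the complex plane. -/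
noncomputable def triArea (p q r : ℂ) : ℝ :=
  |((q - p) * (starRingEnd ℂ) (r - p)).im| / 2

open ComplexConjugate

theorem dist_add_dist_le_dist_add_dist_of_mem_segment {E : Type*} [SeminormedAddCommGroup E]
    [NormedSpace ℝ E] {x y z t w : E} (hxz : w ∈ segment ℝ x z) (hyt : w ∈ segment ℝ y t) :
    dist x y + dist z t ≤ dist x z + dist y t :=
  calc dist x y + dist z t ≤ (dist x w + dist w y) + (dist z w + dist w t) :=
        add_le_add (dist_triangle _ _ _) (dist_triangle _ _ _)
    _ = dist x z + dist y t := by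
        rw [← dist_add_dist_of_mem_segment hxz, ← dist_add_dist_of_mem_segment hyt,
          dist_comm w y, dist_comm z w]
        ring

theorem mul_nonpos_of_add_eq_zero_of_convex {s t x y : ℝ} (hs : 0 ≤ s) (ht : 0 ≤ t)
    (hst : s + t = 1) (h : s * x + t * y = 0) : x * y ≤ 0 := by
  have hxy : x * y = (s * x + t * y) * (x + y) - s * x ^ 2 - t * y ^ 2 := by
    linear_combination (-(x * y)) * hst
  rw [hxy, h, zero_mul]
  linarith [mul_nonneg hs (sq_nonneg x), mul_nonneg ht (sq_nonneg y)]

/-- Signed area of the triangle `p q r`, positive when `p q r` is clockwise. -/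
noncomputable def triSignedArea (p q r : ℂ) : ℝ :=
  ((q - p) * conj (r - p)).im / 2

theorem triArea_eq_abs_triSignedArea (p q r : ℂ) : triArea p q r = |triSignedArea p q r| := by
  rw [triArea, triSignedArea, abs_div, abs_two]

theorem triArea_nonneg (p q r : ℂ) : 0 ≤ triArea p q r := by
  rw [triArea_eq_abs_triSignedArea]
  exact abs_nonneg _

theorem triSignedArea_swap (p q r : ℂ) : triSignedArea p r q = -triSignedArea p q r := by
  simp only [triSignedArea, Complex.mul_im, Complex.conj_re, Complex.conj_im, Complex.sub_re,
    Complex.sub_im]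
  ring

theorem triSignedArea_rotate (p q r : ℂ) : triSignedArea q r p = triSignedArea p q r := by
  simp only [triSignedArea, Complex.mul_im, Complex.conj_re, Complex.conj_im, Complex.sub_re,
    Complex.sub_im]
  ring

theorem triSignedArea_add_triSignedArea (z₁ z₂ z₃ z₄ : ℂ) :
    triSignedArea z₁ z₂ z₃ + triSignedArea z₁ z₃ z₄ =
      triSignedArea z₁ z₂ z₄ + triSignedArea z₂ z₃ z₄ := by
  simp only [triSignedArea, Complex.mul_im, Complex.conj_re, Complex.conj_im, Complex.sub_re,
    Complex.sub_im]
  ring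

theorem triSignedArea_add_smul_add_smul (p q x y : ℂ) {s t : ℝ} (hst : s + t = 1) :
    triSignedArea p q (s • x + t • y) = s * triSignedArea p q x + t * triSignedArea p q y := by
  obtain rfl : t = 1 - s := by linarith
  simp only [triSignedArea, Complex.mul_im, Complex.conj_re, Complex.conj_im, Complex.sub_re,
    Complex.sub_im, Complex.add_re, Complex.add_im, Complex.real_smul, Complex.mul_re,
    Complex.ofReal_re, Complex.ofReal_im]
  ring

theorem triSignedArea_eq_zero_of_mem_segment {p q w : ℂ} (hw : w ∈ segment ℝ p q) :
    triSignedArea p q w = 0 := by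
  obtain ⟨s, t, -, -, hst, rfl⟩ := hw
  have hp : triSignedArea p q p = 0 := by simp [triSignedArea]
  have hq : triSignedArea p q q = 0 := by
    rw [triSignedArea, Complex.mul_conj, Complex.ofReal_im, zero_div]
  rw [triSignedArea_add_smul_add_smul p q p q hst, hp, hq, mul_zero, mul_zero, add_zero]

theorem triSignedArea_mul_nonpos_of_segment_inter_nonempty {p q x y : ℂ}
    (h : (segment ℝ p q ∩ segment ℝ x y).Nonempty) :
    triSignedArea p q x * triSignedArea p q y ≤ 0 := by
  obtain ⟨w, hpq, ⟨s, t, hs, ht, hst, rfl⟩⟩ := h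
  refine mul_nonpos_of_add_eq_zero_of_convex hs ht hst ?_
  rw [← triSignedArea_add_smul_add_smul p q x y hst]
  exact triSignedArea_eq_zero_of_mem_segment hpq

theorem triArea_add_triArea_of_diagonals_meet {z₁ z₂ z₃ z₄ : ℂ}
    (h : (segment ℝ z₁ z₃ ∩ segment ℝ z₂ z₄).Nonempty) :
    triArea z₁ z₂ z₃ + triArea z₁ z₃ z₄ = triArea z₁ z₂ z₄ + triArea z₂ z₃ z₄ := by
  have h₁₃ : 0 ≤ triSignedArea z₁ z₂ z₃ * triSignedArea z₁ z₃ z₄ := by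
    have := triSignedArea_mul_nonpos_of_segment_inter_nonempty h
    rw [triSignedArea_swap] at this
    linarith
  have h₂₄ : 0 ≤ triSignedArea z₁ z₂ z₄ * triSignedArea z₂ z₃ z₄ := by
    have := triSignedArea_mul_nonpos_of_segment_inter_nonempty (Set.inter_comm _ _ ▸ h)
    rw [triSignedArea_rotate, triSignedArea_swap z₂] at this
    linarith
  simp only [triArea_eq_abs_triSignedArea]
  rw [← (abs_add_eq_add_abs_iff _ _).2 (mul_nonneg_iff.1 h₁₃),
    ← (abs_add_eq_add_abs_iff _ _).2 (mul_nonneg_iff.1 h₂₄), triSignedArea_add_triSignedArea]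

/- After eliminating `p = q + s - r`, the expression is a nonnegative combination of two squares
and of products of the nonnegative quantities in the hypotheses. -/
theorem E_sum_nonneg_of_bounds {a b c d e f p q r s : ℝ}
    (hp : 0 ≤ p) (hq : 0 ≤ q) (hr : 0 ≤ r) (hs : 0 ≤ s) (hsum : p + r = q + s)
    (hcde : e ≤ c + d) (hbca : b ≤ c + a) (heaf : e ≤ a + f) (hbdf : b ≤ d + f)
    (hcf : c + f ≤ b + e) (hda : d + a ≤ b + e) :
    0 ≤ p*q*f*(a+b+e+d-2*c) + p*s*d*(c+b+e+f-2*a) + r*s*c*(a+e+d+b-2*f)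
      + q*r*a*(c+e+b+f-2*d) - p*r*e*(a+c+d+f-2*b) - q*s*b*(c+d+f+a-2*e) := by
  obtain rfl : p = q + s - r := by linarith
  have l₁ : 0 ≤ c + d - e := by linarith
  have l₂ : 0 ≤ c + a - b := by linarith
  have l₃ : 0 ≤ a + f - e := by linarith
  have l₄ : 0 ≤ d + f - b := by linarith
  have l₅ : 0 ≤ b + e - c - f := by linarith
  have l₆ : 0 ≤ b + e - d - a := by linarith
  have hsr : 0 ≤ s + r := by linarith
  have hpq : 0 ≤ (q + s - r) + q := by linarith
  have hps : 0 ≤ (q + s - r) + s := by linarith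
  have hqr : 0 ≤ q + r := by linarith
  linarith [sq_nonneg (s * (c + d - e) - q * (a + f - e)),
    sq_nonneg (r * (c + a - b) - (q + s - r) * (d + f - b)),
    mul_nonneg (mul_nonneg (mul_nonneg hr hs) l₁) l₂,
    mul_nonneg (mul_nonneg (mul_nonneg hp hs) l₁) l₄,
    mul_nonneg (mul_nonneg (mul_nonneg hq hr) l₂) l₃,
    mul_nonneg (mul_nonneg (mul_nonneg hp hq) l₃) l₄,
    mul_nonneg (mul_nonneg (mul_nonneg hs hsr) l₅) l₁,
    mul_nonneg (mul_nonneg (mul_nonneg hr hsr) l₅) l₂,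
    mul_nonneg (mul_nonneg (mul_nonneg hq hpq) l₅) l₃,
    mul_nonneg (mul_nonneg (mul_nonneg hp hpq) l₅) l₄,
    mul_nonneg (mul_nonneg (mul_nonneg hs hps) l₆) l₁,
    mul_nonneg (mul_nonneg (mul_nonneg hr hqr) l₆) l₂,
    mul_nonneg (mul_nonneg (mul_nonneg hq hqr) l₆) l₃,
    mul_nonneg (mul_nonneg (mul_nonneg hp hps) l₆) l₄,
    mul_nonneg (mul_nonneg (sq_nonneg (q + s)) l₅) l₆]

theorem E_inequality_general (z₁ z₂ z₃ z₄ : ℂ)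
    (hconvex : (segment ℝ z₁ z₃ ∩ segment ℝ z₂ z₄).Nonempty)
    (a b c d e f : ℝ)
    (ha : a = dist z₂ z₃) (hb : b = dist z₁ z₃) (hc : c = dist z₁ z₂)
    (hd : d = dist z₁ z₄) (he : e = dist z₂ z₄) (hf : f = dist z₃ z₄)
    (A₁₂₃ A₁₂₄ A₁₃₄ A₂₃₄ : ℝ)
    (hA123 : A₁₂₃ = triArea z₁ z₂ z₃) (hA124 : A₁₂₄ = triArea z₁ z₂ z₄)
    (hA134 : A₁₃₄ = triArea z₁ z₃ z₄) (hA234 : A₂₃₄ = triArea z₂ z₃ z₄)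
    (E₁₂ E₂₃ E₃₄ E₁₄ E₁₃ E₂₄ : ℝ)
    (hE12 : E₁₂ = A₁₂₃ * A₁₂₄ * f * (a + b + e + d - 2 * c))
    (hE23 : E₂₃ = A₁₂₃ * A₂₃₄ * d * (c + b + e + f - 2 * a))
    (hE34 : E₃₄ = A₁₃₄ * A₂₃₄ * c * (a + e + d + b - 2 * f))
    (hE14 : E₁₄ = A₁₂₄ * A₁₃₄ * a * (c + e + b + f - 2 * d))
    (hE13 : E₁₃ = A₁₂₃ * A₁₃₄ * e * (a + c + d + f - 2 * b))
    (hE24 : E₂₄ = A₁₂₄ * A₂₃₄ * b * (c + d + f + a - 2 * e)) :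
    0 ≤ E₁₂ + E₂₃ + E₃₄ + E₁₄ - E₁₃ - E₂₄ := by
  obtain ⟨w, hw₁₃, hw₂₄⟩ := hconvex
  have hareas := triArea_add_triArea_of_diagonals_meet ⟨w, hw₁₃, hw₂₄⟩
  have hdiag₁ := dist_add_dist_le_dist_add_dist_of_mem_segment hw₁₃ hw₂₄
  have hdiag₂ := dist_add_dist_le_dist_add_dist_of_mem_segment hw₁₃
    (segment_symm ℝ z₂ z₄ ▸ hw₂₄)
  rw [dist_comm z₃ z₂, dist_comm z₄ z₂] at hdiag₂
  subst_vars
  exact E_sum_nonneg_of_bounds (triArea_nonneg _ _ _) (triArea_nonneg _ _ _)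
    (triArea_nonneg _ _ _) (triArea_nonneg _ _ _) hareas (dist_triangle_left z₂ z₄ z₁)
    (dist_triangle z₁ z₂ z₃) (dist_triangle z₂ z₃ z₄) (dist_triangle_right z₁ z₃ z₄) hdiag₁ hdiag₂

theorem E_inequality (z₁ z₂ z₃ z₄ : ℂ)
    (h12 : z₁ ≠ z₂) (h13 : z₁ ≠ z₃) (h14 : z₁ ≠ z₄)
    (h23 : z₂ ≠ z₃) (h24 : z₂ ≠ z₄) (h34 : z₃ ≠ z₄)
    (hconvex : (segment ℝ z₁ z₃ ∩ segment ℝ z₂ z₄).Nonempty)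
    (a b c d e f : ℝ)
    (ha : a = dist z₂ z₃) (hb : b = dist z₁ z₃) (hc : c = dist z₁ z₂)
    (hd : d = dist z₁ z₄) (he : e = dist z₂ z₄) (hf : f = dist z₃ z₄)
    (A₁₂₃ A₁₂₄ A₁₃₄ A₂₃₄ : ℝ)
    (hA123 : A₁₂₃ = triArea z₁ z₂ z₃) (hA124 : A₁₂₄ = triArea z₁ z₂ z₄)
    (hA134 : A₁₃₄ = triArea z₁ z₃ z₄) (hA234 : A₂₃₄ = triArea z₂ z₃ z₄)
    (E₁₂ E₂₃ E₃₄ E₁₄ E₁₃ E₂₄ : ℝ)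
    (hE12 : E₁₂ = A₁₂₃ * A₁₂₄ * f * (a + b + e + d - 2 * c))
    (hE23 : E₂₃ = A₁₂₃ * A₂₃₄ * d * (c + b + e + f - 2 * a))
    (hE34 : E₃₄ = A₁₃₄ * A₂₃₄ * c * (a + e + d + b - 2 * f))
    (hE14 : E₁₄ = A₁₂₄ * A₁₃₄ * a * (c + e + b + f - 2 * d))
    (hE13 : E₁₃ = A₁₂₃ * A₁₃₄ * e * (a + c + d + f - 2 * b))
    (hE24 : E₂₄ = A₁₂₄ * A₂₃₄ * b * (c + d + f + a - 2 * e)) :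
    0 ≤ E₁₂ + E₂₃ + E₃₄ + E₁₄ - E₁₃ - E₂₄ :=
  E_inequality_general z₁ z₂ z₃ z₄ hconvex a b c d e f ha hb hc hd he hf A₁₂₃ A₁₂₄ A₁₃₄ A₂₃₄ hA123
    hA124 hA134 hA234 E₁₂ E₂₃ E₃₄ E₁₄ E₁₃ E₂₄ hE12 hE23 hE34 hE14 hE13 hE24
end

section
/- Let α_j, β_j, γ_j (j = 1,...,4, indices mod 4) be angles in [0, π] with α_{j+1} + γ_{j+2} + β_{j+3} = π for each j, and let E be a real number with E ≥ 0. Then 24 + 8 Σ_j (cos α_j + cos β_j + cos γ_j) + 2 Σ_j (cos α_j + cos β_j + cos γ_j)(cos α_{j+1} + cos γ_{j+2} + cos β_{j+3}) + E ≥ 64. -/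
open Real

lemma tri_cos_ge_one (A B C : ℝ) (hA : A ∈ Set.Icc 0 π) (hB : B ∈ Set.Icc 0 π)
    (hC : C ∈ Set.Icc 0 π) (hsum : A + B + C = π) :
    1 ≤ Real.cos A + Real.cos B + Real.cos C := by
  obtain ⟨hA0, hAπ⟩ := hA
  obtain ⟨hB0, hBπ⟩ := hB
  obtain ⟨hC0, hCπ⟩ := hC
  have hC' : C = π - (A + B) := by linarith
  have hcosC : Real.cos C = -Real.cos (A + B) := by
    rw [hC', Real.cos_pi_sub]
  have hAB : A ≤ π - B := by linarith
  have hmono : Real.cos (π - B) ≤ Real.cos A :=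
    Real.cos_le_cos_of_nonneg_of_le_pi (by linarith) (by linarith) hAB
  have hcc : 0 ≤ Real.cos A + Real.cos B := by
    rw [Real.cos_pi_sub] at hmono; linarith
  have hsA : 0 ≤ Real.sin A := Real.sin_nonneg_of_nonneg_of_le_pi hA0 hAπ
  have hsB : 0 ≤ Real.sin B := Real.sin_nonneg_of_nonneg_of_le_pi hB0 hBπ
  have hcA1 : Real.cos A ≤ 1 := Real.cos_le_one A
  have hcB1 : Real.cos B ≤ 1 := Real.cos_le_one B
  have hpA : Real.sin A ^ 2 = 1 - Real.cos A ^ 2 := by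
    have := Real.sin_sq_add_cos_sq A; linarith
  have hpB : Real.sin B ^ 2 = 1 - Real.cos B ^ 2 := by
    have := Real.sin_sq_add_cos_sq B; linarith
  have key : (1 - Real.cos A) * (1 - Real.cos B) ≤ Real.sin A * Real.sin B := by
    nlinarith [mul_nonneg hsA hsB, sq_nonneg (Real.sin A * Real.sin B),
      mul_nonneg (mul_nonneg (sub_nonneg.mpr hcA1) (sub_nonneg.mpr hcB1)) hcc,
      sq_nonneg (Real.sin A * Real.sin B - (1 - Real.cos A) * (1 - Real.cos B))]
  rw [hcosC, Real.cos_add]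
  nlinarith [key]

theorem angular_part_ge_64 (α β γ : Fin 4 → ℝ) (E : ℝ) (hE : 0 ≤ E)
    (hα : ∀ j, α j ∈ Set.Icc 0 π) (hβ : ∀ j, β j ∈ Set.Icc 0 π)
    (hγ : ∀ j, γ j ∈ Set.Icc 0 π)
    (h : ∀ j : Fin 4, α (j + 1) + γ (j + 2) + β (j + 3) = π) :
    64 ≤ 24 + 8 * (∑ j : Fin 4, (Real.cos (α j) + Real.cos (β j) + Real.cos (γ j))) +
        2 * (∑ j : Fin 4, (Real.cos (α j) + Real.cos (β j) + Real.cos (γ j)) *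
          (Real.cos (α (j + 1)) + Real.cos (γ (j + 2)) + Real.cos (β (j + 3)))) + E := by
  have hd : ∀ j : Fin 4, 1 ≤ Real.cos (α (j + 1)) + Real.cos (γ (j + 2)) + Real.cos (β (j + 3)) :=
    fun j => tri_cos_ge_one _ _ _ (hα _) (hγ _) (hβ _) (h j)
  have hcα : ∀ j : Fin 4, -1 ≤ Real.cos (α j) := fun j => Real.neg_one_le_cos _
  have hcβ : ∀ j : Fin 4, -1 ≤ Real.cos (β j) := fun j => Real.neg_one_le_cos _
  have hcγ : ∀ j : Fin 4, -1 ≤ Real.cos (γ j) := fun j => Real.neg_one_le_cos _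
  have key : ∀ j : Fin 4,
      10 * (Real.cos (α j) + Real.cos (β j) + Real.cos (γ j))
        - 10 * ((Real.cos (α (j + 1)) + Real.cos (γ (j + 2)) + Real.cos (β (j + 3))) - 1)
        ≤ 8 * (Real.cos (α j) + Real.cos (β j) + Real.cos (γ j))
          + 2 * ((Real.cos (α j) + Real.cos (β j) + Real.cos (γ j)) *
            (Real.cos (α (j + 1)) + Real.cos (γ (j + 2)) + Real.cos (β (j + 3)))) := by
    intro j
    have h1 := hd j
    have h2 := hcα j
    have h3 := hcβ j
    have h4 := hcγ j
    nlinarith [mul_nonneg (by linarith : (0:ℝ) ≤ (Real.cos (α (j + 1)) + Real.cos (γ (j + 2)) + Real.cos (β (j + 3))) - 1)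
      (by linarith : (0:ℝ) ≤ 10 + 2 * (Real.cos (α j) + Real.cos (β j) + Real.cos (γ j)))]
  have k0 := key 0
  have k1 := key 1
  have k2 := key 2
  have k3 := key 3
  have d0 := hd 0
  have d1 := hd 1
  have d2 := hd 2
  have d3 := hd 3
  simp only [Fin.sum_univ_four,
    show ((0:Fin 4) + 1) = 1 from rfl, show ((0:Fin 4) + 2) = 2 from rfl,
    show ((0:Fin 4) + 3) = 3 from rfl, show ((1:Fin 4) + 1) = 2 from rfl,
    show ((1:Fin 4) + 2) = 3 from rfl, show ((1:Fin 4) + 3) = 0 from rfl,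
    show ((2:Fin 4) + 1) = 3 from rfl, show ((2:Fin 4) + 2) = 0 from rfl,
    show ((2:Fin 4) + 3) = 1 from rfl, show ((3:Fin 4) + 1) = 0 from rfl,
    show ((3:Fin 4) + 2) = 1 from rfl, show ((3:Fin 4) + 3) = 2 from rfl]
    at k0 k1 k2 k3 d0 d1 d2 d3 ⊢
  linarith
end
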